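/- arXiv:math/0411146 — 2 statements merged into one kernel-verified Lean document; each statement's English description precedes it below -/
import Mathlib

section
/- Let ι be a real number that is not an integer, let ℓ ∈ ℕ, and let m1, m2 be integers. If ⟨m1 + ι⟩_{ℓ+r} = ⟨m2 + ι⟩_{ℓ+r} for every r ∈ ℕ, then m1 = m2. -/
/-- The falling factorial `⟨a⟩_k = a(a-1)⋯(a-k+1)` of a real number. -/
def ffac (a : ℝ) : ℕ → ℝ
  | 0 => 1
  | n + 1 => ffac a n * (a - n)

lemma ffac_ne_zero (ι : ℝ) (hι : ∀ z : ℤ, ι ≠ (z : ℝ)) (m : ℤ) :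
    ∀ k : ℕ, ffac ((m : ℝ) + ι) k ≠ 0 := by
  intro k
  induction k with
  | zero => simp [ffac]
  | succ n ih =>
    have hfac : (m : ℝ) + ι - n ≠ 0 := by
      intro hzero
      apply hι ((n : ℤ) - m)
      push_cast
      linarith
    exact mul_ne_zero ih hfac

/-- Statement (3.24): if `ι ∈ ℝ \ ℤ`, `ℓ ∈ ℕ`, and `⟨m1 + ι⟩_{ℓ+r} = ⟨m2 + ι⟩_{ℓ+r}`
for every `r ∈ ℕ`, then `m1 = m2`. -/
theorem fallingFactorial_separates (ι : ℝ) (hι : ∀ z : ℤ, ι ≠ (z : ℝ))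
    (ℓ : ℕ) (m1 m2 : ℤ)
    (h : ∀ r : ℕ, ffac ((m1 : ℝ) + ι) (ℓ + r) = ffac ((m2 : ℝ) + ι) (ℓ + r)) :
    m1 = m2 := by
  have h0 := h 0
  have h1 := h 1
  have hne := ffac_ne_zero ι hι m1 (ℓ + 0)
  rw [show ℓ + 1 = (ℓ + 0) + 1 from rfl] at h1
  simp only [ffac] at h1
  simp only [Nat.add_zero] at h0 hne
  rw [← h0] at h1
  have : (m1 : ℝ) + ι - (ℓ : ℕ) = (m2 : ℝ) + ι - (ℓ : ℕ) :=
    mul_left_cancel₀ hne h1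
  have : (m1 : ℝ) = (m2 : ℝ) := by linarith
  exact_mod_cast this
end

section
/- Let m be a positive natural number. In the centrally extended Lie algebra ~gl(∞) of finitely supported matrices indexed by ℤ+1/2, the subspace S_m spanned by all E_{i,j} with |i| > m, |j| > m and ij < 0 is a Lie subalgebra; moreover, the central 2-cocycle α vanishes identically on S_m, i.e. for X, Y ∈ S_m the bracket [X,Y] contains no κ0-component. -/
noncomputable section

/-- The index set `ℤ + 1/2` of half-integers. -/
abbrev HI : Type := {q : ℚ // ∃ n : ℤ, q = (n : ℚ) + 1/2}

instance : Neg HI :=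
  ⟨fun l => ⟨-l.1, by obtain ⟨n, hn⟩ := l.2; exact ⟨-n - 1, by rw [hn]; push_cast; ring⟩⟩⟩

/-- The half-integer `n + 1/2`. -/
def hf (n : ℤ) : HI := ⟨(n : ℚ) + 1/2, ⟨n, rfl⟩⟩

/-- The underlying space of `~gl(∞) = gl(∞) ⊕ ℂκ₀`: finitely supported matrices
indexed by half-integers, together with a central summand `ℂκ₀`. -/
abbrev glV : Type := ((HI × HI) →₀ ℂ) × ℂ

/-- The elementary matrix `E_{a,b}`. -/
def EE (a b : HI) : glV := (Finsupp.single (a, b) 1, 0)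

/-- The central element `κ₀`. -/
def K0 : glV := (0, 1)

/-- The step function `H` on half-integers: `H(l) = 1` for `l > 0`, `H(l) = 0` for `l < 0`. -/
def Hstep (l : HI) : ℂ := if 0 < l.1 then 1 else 0

/-- The hypothesis that a bilinear map `B` on `gl(∞) ⊕ ℂκ₀` is the bracket (3.10):
`κ₀` is central and
`[E_{l1,l2}, E_{k1,k2}] = δ_{l2+k1,0}E_{l1,k2} - δ_{l1+k2,0}E_{k1,l2}
  + δ_{l1+k2,0}δ_{l2+k1,0}(H(l1)H(l2) - H(k1)H(k2))κ₀`. -/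
def IsGlBracket (B : glV →ₗ[ℂ] glV →ₗ[ℂ] glV) : Prop :=
  (∀ v, B K0 v = 0) ∧ (∀ v, B v K0 = 0) ∧
  ∀ l1 l2 k1 k2 : HI,
    B (EE l1 l2) (EE k1 k2)
      = (if l2.1 + k1.1 = 0 then EE l1 k2 else 0)
        - (if l1.1 + k2.1 = 0 then EE k1 l2 else 0)
        + (if l1.1 + k2.1 = 0 ∧ l2.1 + k1.1 = 0 then
            (Hstep l1 * Hstep l2 - Hstep k1 * Hstep k2) • K0 else 0)

/-- The subspace `S_m` spanned by the `E_{i,j}` with `|i| > m`, `|j| > m`, `ij < 0`. -/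
def Sm (m : ℕ) : Submodule ℂ glV :=
  Submodule.span ℂ
    {v | ∃ i j : HI, (m : ℚ) < |i.1| ∧ (m : ℚ) < |j.1| ∧ i.1 * j.1 < 0 ∧ v = EE i j}

lemma Hprod_eq_zero (a b : HI) (h : a.1 * b.1 < 0) : Hstep a * Hstep b = 0 := by
  unfold Hstep
  split_ifs with h1 h2
  · nlinarith
  · ring
  · ring
  · ring

/-- (2.24) (scalar case): for a positive integer `m`, the subspace `S_m` is a Lie
subalgebra of `~gl(∞)`, and the central 2-cocycle vanishes identically on it: for
`X, Y ∈ S_m` the bracket `[X,Y]` lies in `S_m` and has no `κ₀`-component. -/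
theorem glInfinity_truncated_subalgebra (m : ℕ) (hm : 0 < m)
    (B : glV →ₗ[ℂ] glV →ₗ[ℂ] glV) (hB : IsGlBracket B) :
    ∀ x ∈ Sm m, ∀ y ∈ Sm m, B x y ∈ Sm m ∧ (B x y).2 = 0 := by
  obtain ⟨hK1, hK2, hE⟩ := hB
  set N : Submodule ℂ glV :=
    Sm m ⊓ LinearMap.ker (LinearMap.snd ℂ ((HI × HI) →₀ ℂ) ℂ) with hN
  have memN : ∀ a b : HI, (m : ℚ) < |a.1| → (m : ℚ) < |b.1| → a.1 * b.1 < 0 →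
      EE a b ∈ N := by
    intro a b ha hb hab
    refine ⟨Submodule.subset_span ⟨a, b, ha, hb, hab, rfl⟩, ?_⟩
    simp [LinearMap.mem_ker, EE]
  have hgen : ∀ i j k l : HI,
      (m : ℚ) < |i.1| → (m : ℚ) < |j.1| → i.1 * j.1 < 0 →
      (m : ℚ) < |k.1| → (m : ℚ) < |l.1| → k.1 * l.1 < 0 →
      B (EE i j) (EE k l) ∈ N := by
    intro i j k l hi hj hij hk hl hkl
    rw [hE i j k l]
    have h3 : (if i.1 + l.1 = 0 ∧ j.1 + k.1 = 0 then
        (Hstep i * Hstep j - Hstep k * Hstep l) • K0 else 0) = (0 : glV) := by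
      split_ifs with h
      · rw [Hprod_eq_zero i j hij, Hprod_eq_zero k l hkl, sub_zero, zero_smul]
      · rfl
    rw [h3, add_zero]
    have h1 : (if j.1 + k.1 = 0 then EE i l else 0) ∈ N := by
      split_ifs with h
      · have hjl : j.1 * l.1 > 0 := by
          have : k.1 = -j.1 := by linarith
          rw [this] at hkl; nlinarith
        exact memN i l hi hl (by nlinarith [sq_nonneg j.1])
      · exact N.zero_mem
    have h2 : (if i.1 + l.1 = 0 then EE k j else 0) ∈ N := by
      split_ifs with h
      · have hki : k.1 * i.1 > 0 := by
          have : l.1 = -i.1 := by linarith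
          rw [this] at hkl; nlinarith
        exact memN k j hk hj (by nlinarith [sq_nonneg i.1])
      · exact N.zero_mem
    exact N.sub_mem h1 h2
  have main : ∀ x ∈ Sm m, ∀ y ∈ Sm m, B x y ∈ N := by
    intro x hx y hy
    have hstep1 : ∀ g ∈ {v : glV | ∃ i j : HI, (m : ℚ) < |i.1| ∧ (m : ℚ) < |j.1| ∧
        i.1 * j.1 < 0 ∧ v = EE i j}, B g y ∈ N := by
      rintro g ⟨i, j, hi, hj, hij, rfl⟩
      have : Sm m ≤ N.comap (B (EE i j)) := by
        apply Submodule.span_le.mpr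
        rintro v ⟨k, l, hk, hl, hkl, rfl⟩
        exact hgen i j k l hi hj hij hk hl hkl
      exact this hy
    have : Sm m ≤ N.comap (B.flip y) := by
      apply Submodule.span_le.mpr
      intro g hg
      exact hstep1 g hg
    exact this hx
  intro x hx y hy
  obtain ⟨h1, h2⟩ := main x hx y hy
  exact ⟨h1, h2⟩
end
end
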